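/- arXiv:0801.3834 — 5 statements merged into one kernel-verified Lean document; each statement's English description precedes it below -/
import Mathlib

section
/- A separable polynomial over an algebraically closed field k of characteristic p>0 is additive (i.e., P(α+β)=P(α)+P(β) for all α,β in k) if and only if the set of its roots is a subgroup of the additive group of k. -/
open Polynomial

/-- A separable polynomial over an algebraically closed field `k` of characteristic `p > 0`
is additive (i.e. `P (α + β) = P α + P β` for all `α β : k`) if and only if
the set of its roots is an additive subgroup of `k`. -/
theorem separable_additive_iff_roots_addSubgroup
    {k : Type*} [Field k] [IsAlgClosed k] {p : ℕ} [Fact p.Prime] (hch : CharP k p)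
    (P : Polynomial k) (hsep : P.Separable) :
    (∀ a b : k, P.eval (a + b) = P.eval a + P.eval b) ↔
      ∃ H : AddSubgroup k, {x : k | P.eval x = 0} = (H : Set k) := by
  classical
  constructor
  · intro hadd
    have h0 : P.eval 0 = 0 := by
      have h := hadd 0 0
      rw [add_zero] at h
      exact left_eq_add.mp h
    refine ⟨AddMonoidHom.ker
      ({ toFun := fun x => P.eval x, map_zero' := h0, map_add' := hadd } : k →+ k), ?_⟩
    ext x
    simp [AddMonoidHom.mem_ker]
  · rintro ⟨H, hH⟩ a b
    have hP0 : P ≠ 0 := hsep.ne_zero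
    set S : Finset k := P.roots.toFinset with hS
    have hnodup : P.roots.Nodup := nodup_roots hsep
    have hmemS : ∀ x, x ∈ S ↔ P.eval x = 0 := by
      intro x
      simp [hS, Multiset.mem_toFinset, mem_roots hP0, IsRoot]
    have hset : ∀ x, x ∈ S ↔ x ∈ H := by
      intro x
      rw [hmemS]
      exact (Set.ext_iff.mp hH x)
    have h0S : (0 : k) ∈ S := (hset 0).mpr H.zero_mem
    set Q : Polynomial k := ∏ c ∈ S, (X - C c) with hQ
    have hQmonic : Q.Monic := monic_prod_of_monic _ _ fun c _ => monic_X_sub_C c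
    have hQdeg : Q.natDegree = S.card := by
      rw [hQ, natDegree_prod_of_monic _ _ fun c _ => monic_X_sub_C c]
      simp
    have hQeval : ∀ t : k, Q.eval t = ∏ c ∈ S, (t - c) := by
      intro t; simp [hQ, eval_prod]
    have hQroot : ∀ y ∈ S, Q.eval y = 0 := by
      intro y hy
      rw [hQeval]
      exact Finset.prod_eq_zero hy (by ring)
    have hshift : ∀ (x : k), ∀ y ∈ S, Q.eval (x + y) = Q.eval x := by
      intro x y hy
      rw [hQeval, hQeval]
      refine Finset.prod_bij' (fun c _ => c - y) (fun c _ => c + y) ?_ ?_ ?_ ?_ ?_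
      · intro c hc
        exact (hset _).mpr (H.sub_mem ((hset _).mp hc) ((hset _).mp hy))
      · intro c hc
        exact (hset _).mpr (H.add_mem ((hset _).mp hc) ((hset _).mp hy))
      · intro c hc; ring
      · intro c hc; ring
      · intro c hc; ring
    have key : ∀ x y : k, Q.eval (x + y) = Q.eval x + Q.eval y := by
      intro x y
      set R : Polynomial k := Q.comp (X + C x) - Q - C (Q.eval x) with hR
      have hq : 0 < S.card := Finset.card_pos.mpr ⟨0, h0S⟩
      have hcm : (Q.comp (X + C x)).Monic := hQmonic.comp_X_add_C x
      have hcd : (Q.comp (X + C x)).natDegree = S.card := by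
        rw [natDegree_comp, natDegree_X_add_C, mul_one, hQdeg]
      have hQne : Q ≠ 0 := hQmonic.ne_zero
      have hdegA : (Q.comp (X + C x) - Q).degree < (S.card : WithBot ℕ) := by
        have h1 : (Q.comp (X + C x)).degree = Q.degree := by
          rw [degree_eq_natDegree hcm.ne_zero, degree_eq_natDegree hQne, hcd, hQdeg]
        have := degree_sub_lt h1 hcm.ne_zero (by rw [hcm.leadingCoeff, hQmonic.leadingCoeff])
        rwa [degree_eq_natDegree hcm.ne_zero, hcd] at this
      have hdegR : R.degree < (S.card : WithBot ℕ) := by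
        rw [hR]
        refine lt_of_le_of_lt (degree_sub_le _ _) (max_lt hdegA ?_)
        refine lt_of_le_of_lt degree_C_le ?_
        exact_mod_cast WithBot.coe_lt_coe.mpr hq
      have hevalR : ∀ t : k, R.eval t = Q.eval (t + x) - Q.eval t - Q.eval x := by
        intro t; simp [hR, eval_comp]
      have hR0 : R = 0 := by
        by_contra hR0
        have hroots : S ⊆ R.roots.toFinset := by
          intro z hz
          rw [Multiset.mem_toFinset, mem_roots hR0]
          show R.eval z = 0
          rw [hevalR, add_comm z x, hshift x z hz, hQroot z hz]
          ring
        have h1 : S.card ≤ R.roots.toFinset.card := Finset.card_le_card hroots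
        have h2 : R.roots.toFinset.card ≤ Multiset.card R.roots :=
          Multiset.toFinset_card_le _
        have h3 : Multiset.card R.roots ≤ R.natDegree := card_roots' R
        have h4 : R.natDegree < S.card := by
          rwa [← natDegree_lt_iff_degree_lt hR0] at hdegR
        omega
      have h5 := hevalR y
      rw [hR0, eval_zero] at h5
      have h6 : Q.eval (y + x) = Q.eval y + Q.eval x := by linear_combination -h5
      rw [add_comm x y, h6]; ring
    have heq : P = C P.leadingCoeff * Q := by
      have hs := Splits.eq_prod_roots (IsAlgClosed.splits P)
      have hval : S.val = P.roots := by
        rw [hS, Multiset.toFinset_val, Multiset.dedup_eq_self.mpr hnodup]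
      conv_lhs => rw [hs]
      congr 1
      rw [hQ, Finset.prod_eq_multiset_prod, hval]
    rw [heq]
    simp only [eval_mul, eval_C]
    rw [key a b]
    ring
end

section
/- Let a and n be natural numbers and let S_p(a) denote the sum of the digits of a in base p. Then the monomial X^a lies in Σ_n if and only if S_p(a) ≤ n; consequently the least n with X^a ∈ Σ_n equals S_p(a). -/
open Polynomial

/-- The `k`-subspace of `k[X]` spanned by `1` and products of at most `n`
additive polynomials, where additive polynomials are the `k`-span of the monomials `X ^ p ^ i`.
(The empty product gives `1`, so `Σ_0 = k`.) -/
noncomputable def SigmaSp (k : Type*) [Field k] (p : ℕ) (n : ℕ) : Submodule k (Polynomial k) :=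
  Submodule.span k
    {f : Polynomial k | ∃ l : List (Polynomial k), l.length ≤ n ∧
      (∀ g ∈ l, g ∈ Submodule.span k (Set.range fun i : ℕ => (X : Polynomial k) ^ p ^ i)) ∧
      f = l.prod}



lemma digitSum_def {p : ℕ} (hp : 1 < p) {n : ℕ} (hn : 0 < n) :
    (Nat.digits p n).sum = n % p + (Nat.digits p (n / p)).sum := by
  rw [Nat.digits_def' hp hn, List.sum_cons]

lemma digitSum_one {p : ℕ} (hp : 1 < p) : (Nat.digits p 1).sum = 1 := by
  rw [digitSum_def hp Nat.one_pos, Nat.mod_eq_of_lt hp, Nat.div_eq_of_lt hp]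
  simp

lemma digitSum_pow {p : ℕ} (hp : 1 < p) (i : ℕ) : (Nat.digits p (p ^ i)).sum = 1 := by
  induction i with
  | zero => simpa using digitSum_one hp
  | succ i ih =>
    have hpos : 0 < p ^ (i + 1) := pow_pos (by omega) _
    have h1 : p ^ (i + 1) % p = 0 := by simp [pow_succ]
    have h2 : p ^ (i + 1) / p = p ^ i := by
      rw [pow_succ, Nat.mul_div_cancel _ (by omega : 0 < p)]
    rw [digitSum_def hp hpos, h1, h2, Nat.zero_add, ih]

lemma digitSum_add_le {p : ℕ} (hp : 1 < p) (x y : ℕ) :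
    (Nat.digits p (x + y)).sum ≤ (Nat.digits p x).sum + (Nat.digits p y).sum := by
  suffices H : ∀ N x y : ℕ, x + y = N →
      (Nat.digits p (x + y)).sum ≤ (Nat.digits p x).sum + (Nat.digits p y).sum from
    H (x + y) x y rfl
  intro N
  induction N using Nat.strong_induction_on with
  | _ N ih =>
    intro x y hxy
    rcases Nat.eq_zero_or_pos x with hx | hx
    · simp [hx]
    rcases Nat.eq_zero_or_pos y with hy | hy
    · simp [hy]
    have hxyp : 0 < x + y := by omega
    have hxd : x / p < x := Nat.div_lt_self hx hp
    have hyd : y / p < y := Nat.div_lt_self hy hp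
    have hxm : x % p < p := Nat.mod_lt _ (by omega)
    have hym : y % p < p := Nat.mod_lt _ (by omega)
    have key : x + y = (x % p + y % p) + p * (x / p + y / p) := by
      conv_lhs => rw [← Nat.div_add_mod x p, ← Nat.div_add_mod y p]
      ring
    have hSx := digitSum_def hp hx
    have hSy := digitSum_def hp hy
    have hSxy := digitSum_def hp hxyp
    rcases lt_or_ge (x % p + y % p) p with hrp | hrp
    · have hmod : (x + y) % p = x % p + y % p := by
        rw [key, Nat.add_mul_mod_self_left, Nat.mod_eq_of_lt hrp]
      have hdiv : (x + y) / p = x / p + y / p := by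
        rw [key, Nat.add_mul_div_left _ _ (by omega : 0 < p), Nat.div_eq_of_lt hrp, Nat.zero_add]
      have h1 := ih (x / p + y / p) (by omega) (x / p) (y / p) rfl
      rw [hmod, hdiv] at hSxy
      omega
    · have key2 : x + y = (x % p + y % p - p) + p * (x / p + y / p + 1) := by
        rw [key]; ring_nf; omega
      have hmod : (x + y) % p = x % p + y % p - p := by
        rw [key2, Nat.add_mul_mod_self_left, Nat.mod_eq_of_lt (by omega)]
      have hdiv : (x + y) / p = x / p + y / p + 1 := by
        rw [key2, Nat.add_mul_div_left _ _ (by omega : 0 < p), Nat.div_eq_of_lt (by omega),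
          Nat.zero_add]
      have hmul : 2 * (x / p + y / p) ≤ p * (x / p + y / p) :=
        Nat.mul_le_mul_right _ (by omega)
      have hmN : x / p + y / p + 1 < N := by omega
      have h1 := ih (x / p + y / p + 1) hmN (x / p + y / p) 1 rfl
      have h2 := ih (x / p + y / p) (by omega) (x / p) (y / p) rfl
      rw [hmod, hdiv] at hSxy
      rw [digitSum_one hp] at h1
      omega

lemma sum_map_mul (p : ℕ) (l : List ℕ) : (l.map (p * ·)).sum = p * l.sum := by
  induction l with
  | nil => simp
  | cons h t iht => simp [Nat.mul_add, iht]

/-- every `a` is the sum of a list of `S_p(a)` powers of `p`. -/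
lemma exists_pow_list {p : ℕ} (hp : 1 < p) (a : ℕ) :
    ∃ l : List ℕ, (∀ e ∈ l, ∃ i, e = p ^ i) ∧ l.length = (Nat.digits p a).sum ∧ l.sum = a := by
  induction a using Nat.strong_induction_on with
  | _ a ih =>
    rcases Nat.eq_zero_or_pos a with ha | ha
    · exact ⟨[], by simp [ha]⟩
    obtain ⟨l, hpow, hlen, hsum⟩ := ih (a / p) (Nat.div_lt_self ha hp)
    refine ⟨List.replicate (a % p) 1 ++ l.map (p * ·), ?_, ?_, ?_⟩
    · intro e he
      rcases List.mem_append.1 he with h | h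
      · exact ⟨0, by simpa using (List.eq_of_mem_replicate h)⟩
      · obtain ⟨e', he', rfl⟩ := List.mem_map.1 h
        obtain ⟨i, rfl⟩ := hpow e' he'
        exact ⟨i + 1, by ring⟩
    · simp [hlen, digitSum_def hp ha]
    · have hdm := Nat.div_add_mod a p
      simp only [List.sum_append, List.sum_replicate, smul_eq_mul, mul_one, sum_map_mul, hsum]
      omega

open Polynomial

/-- Polynomials whose support exponents have base-`p` digit sum at most `n`. -/
def digitBounded (k : Type*) [Field k] (p n : ℕ) : Submodule k (Polynomial k) where
  carrier := {f | ∀ e, f.coeff e ≠ 0 → (Nat.digits p e).sum ≤ n}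
  add_mem' := by
    intro f g hf hg e he
    rw [Polynomial.coeff_add] at he
    by_cases h : f.coeff e = 0
    · exact hg e (by simpa [h] using he)
    · exact hf e h
  zero_mem' := by intro e he; simp at he
  smul_mem' := by
    intro c f hf e he
    rw [Polynomial.coeff_smul, smul_eq_mul] at he
    exact hf e (right_ne_zero_of_mul he)

lemma digitBounded_mono (k : Type*) [Field k] (p : ℕ) {m n : ℕ} (h : m ≤ n) :
    digitBounded k p m ≤ digitBounded k p n := fun f hf e he => (hf e he).trans h

lemma mul_mem_digitBounded {k : Type*} [Field k] {p : ℕ} (hp : 1 < p) {m n : ℕ}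
    {f g : Polynomial k} (hf : f ∈ digitBounded k p m) (hg : g ∈ digitBounded k p n) :
    f * g ∈ digitBounded k p (m + n) := by
  intro e he
  rw [Polynomial.coeff_mul] at he
  obtain ⟨x, hx, hne⟩ := Finset.exists_ne_zero_of_sum_ne_zero he
  have h1 : f.coeff x.1 ≠ 0 := left_ne_zero_of_mul hne
  have h2 : g.coeff x.2 ≠ 0 := right_ne_zero_of_mul hne
  have hxy : x.1 + x.2 = e := Finset.HasAntidiagonal.mem_antidiagonal.1 hx
  calc (Nat.digits p e).sum = (Nat.digits p (x.1 + x.2)).sum := by rw [hxy]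
    _ ≤ (Nat.digits p x.1).sum + (Nat.digits p x.2).sum := digitSum_add_le hp x.1 x.2
    _ ≤ m + n := Nat.add_le_add (hf _ h1) (hg _ h2)

lemma additive_mem_digitBounded {k : Type*} [Field k] {p : ℕ} (hp : 1 < p)
    {g : Polynomial k}
    (hg : g ∈ Submodule.span k (Set.range fun i : ℕ => (X : Polynomial k) ^ p ^ i)) :
    g ∈ digitBounded k p 1 := by
  refine Submodule.span_le.2 ?_ hg
  rintro f ⟨i, rfl⟩
  intro e he
  rw [Polynomial.coeff_X_pow] at he
  have : e = p ^ i := by by_contra h; simp [h] at he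
  rw [this, digitSum_pow hp]

lemma prod_mem_digitBounded {k : Type*} [Field k] {p : ℕ} (hp : 1 < p)
    (l : List (Polynomial k))
    (h : ∀ g ∈ l, g ∈ Submodule.span k (Set.range fun i : ℕ => (X : Polynomial k) ^ p ^ i)) :
    l.prod ∈ digitBounded k p l.length := by
  induction l with
  | nil =>
    intro e he
    rw [List.prod_nil, Polynomial.coeff_one] at he
    have : e = 0 := by by_contra hh; simp [hh] at he
    simp [this]
  | cons a t iht =>
    rw [List.prod_cons, List.length_cons]
    have h1 : a ∈ digitBounded k p 1 := additive_mem_digitBounded hp (h a (by simp))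
    have h2 : t.prod ∈ digitBounded k p t.length := iht fun g hg => h g (by simp [hg])
    have := mul_mem_digitBounded hp h1 h2
    simpa [Nat.add_comm] using this

lemma X_pow_list_sum {k : Type*} [Field k] (l : List ℕ) :
    (X : Polynomial k) ^ l.sum = (l.map fun e => (X : Polynomial k) ^ e).prod := by
  induction l with
  | nil => simp
  | cons h t ih => simp [pow_add, ih]

/-- The monomial `X ^ a` lies in `Σ_n` if and only if the base-`p` digit sum of `a`
is at most `n`; consequently the least such `n` equals `S_p a`. -/
theorem monomial_mem_SigmaSp_iff_digitSum_le
    {k : Type*} [Field k] [IsAlgClosed k] {p : ℕ} [Fact p.Prime] (hch : CharP k p)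
    (a n : ℕ) :
    (((X : Polynomial k) ^ a ∈ SigmaSp k p n) ↔ (Nat.digits p a).sum ≤ n) ∧
    sInf {m : ℕ | (X : Polynomial k) ^ a ∈ SigmaSp k p m} = (Nat.digits p a).sum := by
  have hp : 1 < p := (Fact.out : p.Prime).one_lt
  have main : ∀ m : ℕ, ((X : Polynomial k) ^ a ∈ SigmaSp k p m) ↔ (Nat.digits p a).sum ≤ m := by
    intro m
    constructor
    · intro hmem
      have hsub : SigmaSp k p m ≤ digitBounded k p m := by
        rw [SigmaSp, Submodule.span_le]
        rintro f ⟨l, hlen, hadd, rfl⟩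
        exact digitBounded_mono k p hlen (prod_mem_digitBounded hp l hadd)
      refine hsub hmem a ?_
      rw [Polynomial.coeff_X_pow]
      simp
    · intro hle
      obtain ⟨l, hpow, hlen, hsum⟩ := exists_pow_list hp a
      refine Submodule.subset_span ⟨l.map (fun e => (X : Polynomial k) ^ e), ?_, ?_, ?_⟩
      · rw [List.length_map, hlen]; exact hle
      · rintro g hg
        obtain ⟨e, he, rfl⟩ := List.mem_map.1 hg
        obtain ⟨i, rfl⟩ := hpow e he
        exact Submodule.subset_span ⟨i, rfl⟩
      · rw [← hsum, X_pow_list_sum]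
  refine ⟨main n, ?_⟩
  have hset : {m : ℕ | (X : Polynomial k) ^ a ∈ SigmaSp k p m} =
      Set.Ici ((Nat.digits p a).sum) := by
    ext m
    simpa [Set.mem_Ici] using main m
  rw [hset]
  exact csInf_Ici
end

section
/- For every y in k and every n in ℤ, the difference operator Δ_y defined by Δ_y(f)(X) = f(X+y) − f(X) maps Σ_{n+1} into Σ_n. -/
open Polynomial

/-- `Σ_n` for `n : ℤ`, with `Σ_n = {0}` for `n < 0`. -/
noncomputable def SigmaSpZ (k : Type*) [Field k] (p : ℕ) (n : ℤ) : Submodule k (Polynomial k) :=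
  if 0 ≤ n then SigmaSp k p n.toNat else ⊥

lemma SigmaSp_mono {k : Type*} [Field k] {p : ℕ} {m n : ℕ} (h : m ≤ n) :
    SigmaSp k p m ≤ SigmaSp k p n := by
  apply Submodule.span_mono
  rintro f ⟨l, hl, hadd, rfl⟩
  exact ⟨l, hl.trans h, hadd, rfl⟩

lemma additive_comp {k : Type*} [Field k] {p : ℕ} [Fact p.Prime] (hch : CharP k p) (y : k)
    {g : Polynomial k}
    (hg : g ∈ Submodule.span k (Set.range fun i : ℕ => (X : Polynomial k) ^ p ^ i)) :
    g.comp (X + C y) = g + C (g.eval y) := by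
  haveI := hch
  haveI : CharP (Polynomial k) p := inferInstance
  refine Submodule.span_induction ?_ ?_ ?_ ?_ hg
  · rintro x ⟨i, rfl⟩
    simp only [pow_comp, X_comp, eval_pow, eval_X]
    rw [add_pow_char_pow, ← C_pow]
  · simp
  · intro a b _ _ ha hb
    simp only [add_comp, eval_add, C_add, ha, hb]; ring
  · intro c a _ ha
    rw [smul_comp, ha, smul_add]
    congr 1
    rw [eval_smul, smul_eq_mul, C_mul, ← smul_eq_C_mul]

lemma mul_mem_sigma {k : Type*} [Field k] {p m : ℕ} {g h : Polynomial k}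
    (hg : g ∈ Submodule.span k (Set.range fun i : ℕ => (X : Polynomial k) ^ p ^ i))
    (hh : h ∈ SigmaSp k p m) : g * h ∈ SigmaSp k p (m + 1) := by
  refine Submodule.span_induction ?_ ?_ ?_ ?_ hh
  · rintro x ⟨l, hl, hadd, rfl⟩
    refine Submodule.subset_span ⟨g :: l, by simpa using hl, ?_, (List.prod_cons).symm⟩
    intro a ha
    rcases List.mem_cons.mp ha with rfl | ha
    · exact hg
    · exact hadd a ha
  · simp
  · intro a b _ _ ha hb; rw [mul_add]; exact add_mem ha hb
  · intro c a _ ha; rw [mul_smul_comm]; exact Submodule.smul_mem _ _ ha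

lemma prod_mem_sigma {k : Type*} [Field k] {p m : ℕ} {l : List (Polynomial k)}
    (hl : l.length ≤ m)
    (hadd : ∀ g ∈ l, g ∈ Submodule.span k (Set.range fun i : ℕ => (X : Polynomial k) ^ p ^ i)) :
    l.prod ∈ SigmaSp k p m :=
  Submodule.subset_span ⟨l, hl, hadd, rfl⟩

lemma list_delta {k : Type*} [Field k] {p : ℕ} [Fact p.Prime] (hch : CharP k p) (y : k) :
    ∀ (l : List (Polynomial k)) (m : ℕ), l.length ≤ m + 1 →
      (∀ g ∈ l, g ∈ Submodule.span k (Set.range fun i : ℕ => (X : Polynomial k) ^ p ^ i)) →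
      (l.prod).comp (X + C y) - l.prod ∈ SigmaSp k p m := by
  intro l
  induction l with
  | nil => intro m _ _; simp
  | cons g t ih =>
    intro m hm hadd
    have hg := hadd g List.mem_cons_self
    have ht : ∀ a ∈ t, a ∈ Submodule.span k (Set.range fun i : ℕ => (X : Polynomial k) ^ p ^ i) :=
      fun a ha => hadd a (List.mem_cons_of_mem _ ha)
    have hcomp := additive_comp hch y hg
    have key : (List.prod (g :: t)).comp (X + C y) - (g :: t).prod
        = g * ((t.prod).comp (X + C y) - t.prod)
          + C (g.eval y) * ((t.prod).comp (X + C y)) := by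
      simp only [List.prod_cons, mul_comp, hcomp]; ring
    rw [key]
    match m with
    | 0 =>
      have htnil : t = [] := List.length_eq_zero_iff.mp (by simpa using hm)
      subst htnil
      simp only [List.prod_nil, one_comp, sub_self, mul_zero, zero_add, mul_one]
      have h1 : (1 : Polynomial k) ∈ SigmaSp k p 0 :=
        Submodule.subset_span ⟨[], by simp, by simp, by simp⟩
      have hC : (C (eval y g) : Polynomial k) = (eval y g) • (1 : Polynomial k) := by
        rw [smul_eq_C_mul, mul_one]
      rw [hC]
      exact Submodule.smul_mem _ _ h1
    | m' + 1 =>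
      have hlen : t.length ≤ m' + 1 := by simpa using hm
      have hd := ih m' hlen ht
      apply add_mem
      · exact mul_mem_sigma hg hd
      · rw [← smul_eq_C_mul]
        apply Submodule.smul_mem
        have : (t.prod).comp (X + C y) = t.prod + ((t.prod).comp (X + C y) - t.prod) := by ring
        rw [this]
        exact add_mem (prod_mem_sigma hlen ht) (SigmaSp_mono (Nat.le_succ m') hd)

lemma sigma_delta {k : Type*} [Field k] {p : ℕ} [Fact p.Prime] (hch : CharP k p) (y : k)
    (m : ℕ) {f : Polynomial k} (hf : f ∈ SigmaSp k p (m + 1)) :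
    f.comp (X + C y) - f ∈ SigmaSp k p m := by
  refine Submodule.span_induction ?_ ?_ ?_ ?_ hf
  · rintro x ⟨l, hl, hadd, rfl⟩
    exact list_delta hch y l m hl hadd
  · simp
  · intro a b _ _ ha hb
    have : (a + b).comp (X + C y) - (a + b)
        = (a.comp (X + C y) - a) + (b.comp (X + C y) - b) := by
      rw [add_comp]; ring
    rw [this]; exact add_mem ha hb
  · intro c a _ ha
    rw [smul_comp, ← smul_sub]
    exact Submodule.smul_mem _ _ ha

lemma sigma_zero_comp {k : Type*} [Field k] {p : ℕ} (y : k) {f : Polynomial k}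
    (hf : f ∈ SigmaSp k p 0) : f.comp (X + C y) = f := by
  refine Submodule.span_induction ?_ ?_ ?_ ?_ hf
  · rintro x ⟨l, hl, -, rfl⟩
    have : l = [] := List.length_eq_zero_iff.mp (Nat.le_zero.mp hl)
    subst this; simp
  · simp
  · intro a b _ _ ha hb; rw [add_comp, ha, hb]
  · intro c a _ ha; rw [smul_comp, ha]

/-- For every `y ∈ k` and every `n : ℤ`, the difference operator
`Δ_y f = f (X + y) - f X` maps `Σ_{n+1}` into `Σ_n`. -/
theorem delta_maps_SigmaSpZ
    {k : Type*} [Field k] [IsAlgClosed k] {p : ℕ} [Fact p.Prime] (hch : CharP k p)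
    (y : k) (n : ℤ) (f : Polynomial k) (hf : f ∈ SigmaSpZ k p (n + 1)) :
    f.comp (X + C y) - f ∈ SigmaSpZ k p n := by
  unfold SigmaSpZ at hf ⊢
  rcases le_or_gt 0 n with hn | hn
  · rw [if_pos hn]
    rw [if_pos (by omega : (0:ℤ) ≤ n + 1)] at hf
    have : (n + 1).toNat = n.toNat + 1 := by omega
    rw [this] at hf
    exact sigma_delta hch y n.toNat hf
  · rw [if_neg (not_le.mpr hn)]
    rcases eq_or_lt_of_le (by omega : n ≤ -1) with heq | hlt
    · rw [heq] at hf
      norm_num at hf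
      rw [sigma_zero_comp y hf, sub_self]
      exact Submodule.zero_mem _
    · rw [if_neg (by omega : ¬ (0:ℤ) ≤ n + 1)] at hf
      simp only [Submodule.mem_bot] at hf
      subst hf
      simp
end

section
/- Let G be a finite p-group with D(G) ≅ (ℤ/pℤ)^n elementary abelian, G/D(G) ≅ (ℤ/pℤ)^v, and suppose the conjugation representation φ: G/D(G) → Aut(D(G)) is, in some basis of D(G), given by lower unitriangular matrices Φ(y) with subdiagonal entries ℓ_{i+1,i}(y), all of which are nonzero linear forms. Then all the forms ℓ_{i+1,i} are proportional: for each i there exists λ_i ∈ 𝔽_p∖{0} with ℓ_{i+1,i} = λ_i ℓ_{2,1}. -/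
open scoped commutatorElement

/-- Let `G` be a finite `p`-group with `D(G) ≅ (ℤ/pℤ)^n` elementary abelian and
`G/D(G) ≅ (ℤ/pℤ)^v`, and suppose the conjugation representation of `G/D(G)` on `D(G)` is
given, in some basis of `D(G)`, by lower unitriangular matrices `Φ g` whose subdiagonal
entries `ℓ_{i+1,i}` are all nonzero (linear) forms. Then all the subdiagonal forms are
proportional: for each `i` there is `λ_i ∈ 𝔽_p \ {0}` with `ℓ_{i+1,i} = λ_i • ℓ_{2,1}`. -/
theorem subdiagonal_forms_proportional
    {p n v : ℕ} [Fact p.Prime] (hn : 2 ≤ n)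
    {G : Type*} [Group G] [Finite G] (hG : IsPGroup p G)
    (ι : (commutator G) ≃* Multiplicative (Fin n → ZMod p))
    (ιQ : (G ⧸ commutator G) ≃* Multiplicative (Fin v → ZMod p))
    (Φ : G → Matrix (Fin n) (Fin n) (ZMod p))
    (hmul : ∀ g h : G, Φ (g * h) = Φ g * Φ h)
    (hker : ∀ x ∈ commutator G, Φ x = 1)
    (hdiag : ∀ (g : G) (i : Fin n), Φ g i i = 1)
    (htri : ∀ (g : G) (i j : Fin n), (i : ℕ) < (j : ℕ) → Φ g i j = 0)
    (hconj : ∀ (g : G) (x y : commutator G), (y : G) = g⁻¹ * (x : G) * g →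
      Multiplicative.toAdd (ι y) = (Φ g).mulVec (Multiplicative.toAdd (ι x)))
    (hnz : ∀ i : ℕ, (hi : i + 1 < n) → ∃ g : G, Φ g ⟨i + 1, hi⟩ ⟨i, by omega⟩ ≠ 0) :
    ∀ i : ℕ, (hi : i + 1 < n) → ∃ lam : ZMod p, lam ≠ 0 ∧
      ∀ g : G, Φ g ⟨i + 1, hi⟩ ⟨i, by omega⟩ = lam * Φ g ⟨1, by omega⟩ ⟨0, by omega⟩ := by

  -- The matrices Φ g pairwise commute, since Φ kills the commutator subgroup.
  have hcomm : ∀ g h : G, Φ g * Φ h = Φ h * Φ g := by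
    intro g h
    have hc : ⁅g⁻¹, h⁻¹⁆ ∈ commutator G := by
      rw [commutator_def]
      exact Subgroup.commutator_mem_commutator (Subgroup.mem_top _) (Subgroup.mem_top _)
    have hg : g * h = (h * g) * ⁅g⁻¹, h⁻¹⁆ := by
      rw [commutatorElement_def]; group
    calc Φ g * Φ h = Φ (g * h) := (hmul g h).symm
      _ = Φ (h * g) * Φ ⁅g⁻¹, h⁻¹⁆ := by rw [hg, hmul]
      _ = Φ (h * g) := by rw [hker _ hc, mul_one]
      _ = Φ h * Φ g := hmul h g
  -- Entry (i+2, i) of a product.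
  have hsum : ∀ (i : ℕ) (hi2 : i + 2 < n) (g h : G),
      (Φ g * Φ h) ⟨i + 2, hi2⟩ ⟨i, by omega⟩ =
        Φ g ⟨i + 2, hi2⟩ ⟨i, by omega⟩ +
        Φ g ⟨i + 2, hi2⟩ ⟨i + 1, by omega⟩ * Φ h ⟨i + 1, by omega⟩ ⟨i, by omega⟩ +
        Φ h ⟨i + 2, hi2⟩ ⟨i, by omega⟩ := by
    intro i hi2 g h
    set i0 : Fin n := ⟨i, by omega⟩
    set i1 : Fin n := ⟨i + 1, by omega⟩
    set i2 : Fin n := ⟨i + 2, hi2⟩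
    have hzero : ∀ k ∈ Finset.univ, k ∉ ({i0, i1, i2} : Finset (Fin n)) →
        Φ g i2 k * Φ h k i0 = 0 := by
      intro k _ hk
      simp only [Finset.mem_insert, Finset.mem_singleton] at hk
      push_neg at hk
      obtain ⟨h0, h1, h2⟩ := hk
      have h0' : (k : ℕ) ≠ i := fun e => h0 (Fin.ext e)
      have h1' : (k : ℕ) ≠ i + 1 := fun e => h1 (Fin.ext e)
      have h2' : (k : ℕ) ≠ i + 2 := fun e => h2 (Fin.ext e)
      rcases lt_or_ge (k : ℕ) i with hk' | hk'
      · rw [htri h k i0 hk', mul_zero]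
      · have : (i + 2 : ℕ) < (k : ℕ) := by omega
        rw [htri g i2 k this, zero_mul]
    have hne01 : i0 ≠ i1 := by simp [i0, i1, Fin.ext_iff]
    have hne02 : i0 ≠ i2 := by simp [i0, i2, Fin.ext_iff]
    have hne12 : i1 ≠ i2 := by simp [i1, i2, Fin.ext_iff]
    rw [Matrix.mul_apply,
      ← Finset.sum_subset (Finset.subset_univ ({i0, i1, i2} : Finset (Fin n)))
        (fun k _ hk => hzero k (Finset.mem_univ k) hk)]
    rw [Finset.sum_insert (by simp [hne01, hne02]),
      Finset.sum_insert (by simp [hne12]), Finset.sum_singleton]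
    rw [hdiag h i0, hdiag g i2, mul_one, one_mul]
    ring
  -- Key relation between consecutive subdiagonal forms.
  have hkey : ∀ (i : ℕ) (hi2 : i + 2 < n) (g h : G),
      Φ g ⟨i + 2, hi2⟩ ⟨i + 1, by omega⟩ * Φ h ⟨i + 1, by omega⟩ ⟨i, by omega⟩ =
      Φ h ⟨i + 2, hi2⟩ ⟨i + 1, by omega⟩ * Φ g ⟨i + 1, by omega⟩ ⟨i, by omega⟩ := by
    intro i hi2 g h
    have := congrArg (fun M => M ⟨i + 2, hi2⟩ (⟨i, by omega⟩ : Fin n)) (hcomm g h)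
    simp only [hsum i hi2] at this
    linear_combination this
  intro i hi
  induction i with
  | zero =>
    exact ⟨1, one_ne_zero, fun g => (one_mul _).symm⟩
  | succ i ih =>
    obtain ⟨lam, hlam, hprop⟩ := ih (by omega)
    obtain ⟨h, hh⟩ := hnz i (by omega)
    obtain ⟨g0, hg0⟩ := hnz (i + 1) hi
    set mu : ZMod p := Φ h ⟨i + 2, by omega⟩ ⟨i + 1, by omega⟩ *
      (Φ h ⟨i + 1, by omega⟩ ⟨i, by omega⟩)⁻¹ with hmu
    have hstep : ∀ g : G, Φ g ⟨i + 2, by omega⟩ ⟨i + 1, by omega⟩ =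
        mu * Φ g ⟨i + 1, by omega⟩ ⟨i, by omega⟩ := by
      intro g
      have hk := hkey i (by omega) g h
      field_simp [hmu]
      linear_combination hk * (Φ h ⟨i + 1, by omega⟩ ⟨i, by omega⟩)⁻¹ -
        Φ g ⟨i + 2, by omega⟩ ⟨i + 1, by omega⟩ * mul_inv_cancel₀ hh
    have hmune : mu ≠ 0 := by
      intro h0
      apply hg0
      rw [hstep g0, h0, zero_mul]
    refine ⟨mu * lam, mul_ne_zero hmune hlam, fun g => ?_⟩
    rw [hstep g, hprop g, hmu]; ring
end

section
/- Let p ≥ 3, let n ≤ p−2, let S(X) = X^p − X, and let V = {y ∈ k : S(S(y)) = 0}, which is an 𝔽_p-subspace of k isomorphic to (ℤ/pℤ)². For 1 ≤ i ≤ n set g_i(X) = S(X)^{i+1}/(i+1)!. Then for every y ∈ V and every i, g_i(X+y) − g_i(X) ≡ Σ_{j=1}^{i−1} (S(y)^{i−j}/(i−j)!) · g_j(X) mod ℘(k[X]), where ℘(P) = P^p − P (the sum being empty for i = 1). -/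
open Polynomial

/-- Let `p ≥ 3`, `k` algebraically closed of characteristic `p`, `S X = X ^ p - X`, and
`V = {y : k | S (S y) = 0}`, an `𝔽_p`-subspace of `k` isomorphic to `(ℤ/pℤ)²`
(it is an additive subgroup of cardinality `p ^ 2`). For `1 ≤ i ≤ n ≤ p - 2` set
`g_i = S ^ (i+1) / (i+1)!`. Then for every `y ∈ V`,
`g_i (X + y) - g_i X ≡ ∑_{j=1}^{i-1} (S y) ^ (i-j) / (i-j)! • g_j  mod ℘(k[X])`. -/
theorem special_family_congruence
    {p : ℕ} (hp : p.Prime) (hp3 : 3 ≤ p)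
    {k : Type*} [Field k] [IsAlgClosed k] [CharP k p]
    (n : ℕ) (hn : n ≤ p - 2)
    (V : Set k) (hV : V = {y : k | (y ^ p - y) ^ p - (y ^ p - y) = 0})
    (S : Polynomial k) (hS : S = X ^ p - X)
    (g : ℕ → Polynomial k)
    (hg : ∀ i : ℕ, g i = C ((Nat.factorial (i + 1) : k))⁻¹ * S ^ (i + 1)) :
    ((0 : k) ∈ V) ∧
    (∀ y₁ ∈ V, ∀ y₂ ∈ V, y₁ + y₂ ∈ V) ∧
    (∀ y ∈ V, -y ∈ V) ∧
    V.ncard = p ^ 2 ∧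
    (∀ y ∈ V, ∀ i : ℕ, 1 ≤ i → i ≤ n →
      ∃ P : Polynomial k,
        (g i).comp (X + C y) - g i
          = (∑ j ∈ Finset.Ico 1 i,
              C ((y ^ p - y) ^ (i - j) * ((Nat.factorial (i - j) : k))⁻¹) * g j)
            + (P ^ p - P)) := by
  haveI := Fact.mk hp
  have hp0 : 0 < p := hp.pos
  subst hV
  refine ⟨?_, ?_, ?_, ?_, ?_⟩
  · simp [Set.mem_setOf_eq, zero_pow hp0.ne']
  · intro y₁ h1 y₂ h2
    simp only [Set.mem_setOf_eq] at *
    have h : (y₁+y₂) ^ p - (y₁+y₂) = (y₁^p - y₁) + (y₂^p - y₂) := by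
      rw [add_pow_char]; ring
    rw [h, add_pow_char]
    linear_combination h1 + h2
  · intro y hy
    simp only [Set.mem_setOf_eq] at *
    have hodd : Odd p := hp.odd_of_ne_two (by omega)
    have h : (-y) ^ p - (-y) = -(y^p - y) := by rw [hodd.neg_pow]; ring
    rw [h, hodd.neg_pow]
    linear_combination -hy
  · -- cardinality
    set q : k[X] := (X ^ p - X) ^ p - (X ^ p - X) with hq
    have hfdeg : (X ^ p - X : k[X]).degree = p := by
      rw [degree_sub_eq_left_of_degree_lt]
      · exact degree_X_pow p
      · rw [degree_X_pow, degree_X]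
        exact_mod_cast by omega
    have hfnd : (X ^ p - X : k[X]).natDegree = p := natDegree_eq_of_degree_eq_some hfdeg
    have hqnd : q.natDegree = p ^ 2 := by
      rw [hq, natDegree_sub_eq_left_of_natDegree_lt, natDegree_pow, hfnd, sq]
      rw [natDegree_pow, hfnd]
      nlinarith
    have hq0 : q ≠ 0 := fun h => by rw [h, natDegree_zero] at hqnd; nlinarith
    have hder : derivative q = 1 := by
      rw [hq]
      simp [derivative_pow, CharP.cast_eq_zero k p]
    have hsep : q.Separable := by
      rw [Polynomial.Separable, hder]
      exact isCoprime_one_right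
    have hroot : {y : k | (y ^ p - y) ^ p - (y ^ p - y) = 0} = q.rootSet k := by
      ext y
      rw [mem_rootSet]
      rw [hq] at hq0
      simp [hq, hq0]
    rw [hroot]
    have hcard := card_rootSet_eq_natDegree (K := k) hsep (by simpa using IsAlgClosed.splits q)
    rw [← Nat.card_coe_set_eq, Nat.card_eq_fintype_card, hcard, hqnd]
  · -- main congruence
    intro y hy i hi1 hin
    simp only [Set.mem_setOf_eq] at hy
    set s : k := y ^ p - y with hs_def
    have hs : s ^ p = s := by linear_combination hy
    have hip : i + 1 ≤ p - 1 := by omega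
    have hnat : ∀ m : ℕ, ((m : k)) ^ p = m := by
      intro m
      rw [← frobenius_def, map_natCast]
    have hfac : ∀ m : ℕ, m ≤ p - 1 → ((m.factorial : k)) ≠ 0 := by
      intro m hm
      rw [Ne, CharP.cast_eq_zero_iff k p]
      intro hdvd
      have := (Nat.Prime.dvd_factorial hp).mp hdvd
      omega
    obtain ⟨a, ha⟩ : ∃ a : k, a ^ p - a = s ^ (i + 1) * ((Nat.factorial (i + 1) : k))⁻¹ := by
      set c0 : k := s ^ (i + 1) * ((Nat.factorial (i + 1) : k))⁻¹
      have hdeg : (X ^ p - (X + C c0) : k[X]).degree ≠ 0 := by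
        rw [degree_sub_eq_left_of_degree_lt, degree_X_pow]
        · simp; omega
        · rw [degree_X_pow]
          calc (X + C c0 : k[X]).degree ≤ max (X : k[X]).degree (C c0).degree :=
                degree_add_le _ _
            _ ≤ 1 := by simp [degree_X, degree_C_le]; exact degree_C_le.trans (by norm_num)
            _ < p := by exact_mod_cast by omega
      obtain ⟨a, ha⟩ := IsAlgClosed.exists_root _ hdeg
      refine ⟨a, ?_⟩
      have := ha
      simp only [IsRoot, eval_sub, eval_add, eval_pow, eval_X, eval_C] at this
      linear_combination this
    set c : ℕ → k := fun m => s ^ (i + 1 - m) * ((Nat.factorial (i + 1 - m) : k))⁻¹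
        * ((Nat.factorial m : k))⁻¹ with hc
    set c1 : k := s ^ i * ((Nat.factorial i : k))⁻¹ with hc1
    have hc1' : c 1 = c1 := by simp [hc, hc1]
    have hc0' : c 0 = s ^ (i + 1) * ((Nat.factorial (i + 1) : k))⁻¹ := by simp [hc]
    have hScomp : S.comp (X + C y) = S + C s := by
      rw [hS]
      simp only [sub_comp, pow_comp, X_comp]
      rw [add_pow_char, ← C_pow]
      rw [hs_def, map_sub]
      ring
    have hLHS : (g i).comp (X + C y) = ∑ m ∈ Finset.range (i + 2), C (c m) * S ^ m := by
      rw [hg i, mul_comp, C_comp, pow_comp, hScomp, add_pow]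
      rw [Finset.mul_sum]
      refine Finset.sum_congr rfl fun m hm => ?_
      rw [Finset.mem_range] at hm
      have hm' : m ≤ i + 1 := by omega
      rw [← C_pow, ← C_eq_natCast]
      have hchoose : ((i+1).choose m * m.factorial * (i + 1 - m).factorial : k)
          = ((i+1).factorial : k) := by
        rw_mod_cast [Nat.choose_mul_factorial_mul_factorial hm']
      have h1 : ((Nat.factorial (i+1-m) : k)) ≠ 0 := hfac _ (by omega)
      have h2 : ((Nat.factorial m : k)) ≠ 0 := hfac _ (by omega)
      have h3 : ((Nat.factorial (i+1) : k)) ≠ 0 := hfac _ (by omega)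
      have hcoef : c m = ((Nat.factorial (i+1) : k))⁻¹
          * (s ^ (i + 1 - m) * ((i+1).choose m : k)) := by
        simp only [hc]
        field_simp
        linear_combination (-(s ^ (i + 1 - m))) * hchoose
      rw [hcoef, C_mul, C_mul, C_pow]
      ring
    refine ⟨C a + C c1 * X, ?_⟩
    have hc1p : c1 ^ p = c1 := by
      rw [hc1, mul_pow, ← pow_mul, mul_comm i p, pow_mul, hs, inv_pow, hnat]
    have hP : (C a + C c1 * X) ^ p - (C a + C c1 * X) = C (c 0) + C (c 1) * S := by
      rw [add_pow_char, mul_pow, ← C_pow, ← C_pow, hc1p, hc1', hc0', ← ha, hS, map_sub]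
      ring
    rw [hP, hLHS]
    have hsum : ∀ j ∈ Finset.Ico 1 i,
        C (s ^ (i - j) * ((Nat.factorial (i - j) : k))⁻¹) * g j = C (c (j+1)) * S ^ (j+1) := by
      intro j hj
      rw [Finset.mem_Ico] at hj
      rw [hg j, ← mul_assoc, ← C_mul]
      simp only [hc]
      rw [show i + 1 - (j + 1) = i - j from by omega, mul_assoc]
    rw [Finset.sum_congr rfl hsum]
    have hgi : g i = C (c (i+1)) * S ^ (i+1) := by
      rw [hg i, hc]
      simp
    rw [hgi]
    rw [Finset.sum_range_succ, Finset.sum_range_succ']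
    have hsplit : ∑ m ∈ Finset.range i, C (c (m+1)) * S ^ (m+1)
        = C (c 1) * S ^ 1 + ∑ m ∈ Finset.Ico 1 i, C (c (m+1)) * S ^ (m+1) := by
      rw [Finset.range_eq_Ico, Finset.sum_eq_sum_Ico_succ_bot (by omega : 0 < i)]
    rw [hsplit]
    simp only [pow_zero, pow_one]
    ring
end
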